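/- arXiv:2106.05928 — 4 statements merged into one kernel-verified Lean document; each statement's English description precedes it below -/
import Mathlib

section
/- Let G be a graph with chromatic number χ(G) = k. Then for every t ∈ {0,…,k} and every signature σ of G: χ^t_sym(G,σ) ≤ 2k − t. Furthermore, for the signed expansion ±G one has χ^t_sym(±G) = 2k − t, and there exist simple signed graphs (H,σ_H) with χ(H) = k and χ^t_sym(H,σ_H) = 2k − t. -/
/-!
Common framework for symmetric-set colorings of signed graphs
(C. Cappello, E. Steffen, "Symmetric set coloring of signed graphs").

* A signed graph is a `SimpleGraph V` together with a signature
  `σ : Sym2 V → Bool` (`true` = positive edge, `false` = negative edge);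
  only the values of `σ` on edges of `G` matter.
* The canonical symmetric set `S_{2k}^t` with `t` self-inverse elements and
  `k` pairs of non-self-inverse elements is `Sym t k := Fin t ⊕ Fin k × Bool`,
  with negation `symNeg` fixing the `Fin t` part and swapping the Boolean.
-/

namespace SymSet

/-- The canonical symmetric set `S_{2k}^t`. -/
abbrev Sym (t k : ℕ) := Fin t ⊕ Fin k × Bool

/-- Negation on the symmetric set: self-inverse elements are fixed,
the two elements of each pair are exchanged. -/
def symNeg {t k : ℕ} : Sym t k → Sym t k
  | .inl i => .inl i
  | .inr (i, b) => .inr (i, !b)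

/-- Action of a sign on a color: a positive sign acts trivially,
a negative sign acts by negation. -/
def signAct {t k : ℕ} (s : Bool) (x : Sym t k) : Sym t k :=
  if s then x else symNeg x

variable {V : Type*}

/-- A proper `S_{2k}^t`-coloring of the signed graph `(G, σ)`:
`c v ≠ σ(e) · c w` for every edge `e = vw`. -/
def IsProperColoring (G : SimpleGraph V) (σ : Sym2 V → Bool) {t k : ℕ}
    (c : V → Sym t k) : Prop :=
  ∀ ⦃v w : V⦄, G.Adj v w → c v ≠ signAct (σ s(v, w)) (c w)

/-- `(G, σ)` admits a proper `S_{2k}^t`-coloring. -/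
def SymColorable (G : SimpleGraph V) (σ : Sym2 V → Bool) (t k : ℕ) : Prop :=
  ∃ c : V → Sym t k, IsProperColoring G σ c

/-- The symset `t`-chromatic number `χ^t_sym(G, σ)`: the least `t + 2k`
such that `(G, σ)` admits a proper `S_{2k}^t`-coloring. -/
noncomputable def symChromT (G : SimpleGraph V) (σ : Sym2 V → Bool) (t : ℕ) : ℕ :=
  sInf {n | ∃ k, n = t + 2 * k ∧ SymColorable G σ t k}

/-- The chromatic number of the underlying graph, as a natural number. -/
noncomputable def chrom (G : SimpleGraph V) : ℕ := G.chromaticNumber.toNat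

/-- The symset chromatic number `χ_sym(G, σ)`: the minimum of
`χ^t_sym(G, σ)` over `0 ≤ t ≤ χ(G)`. -/
noncomputable def symChrom (G : SimpleGraph V) (σ : Sym2 V → Bool) : ℕ :=
  sInf {n | ∃ t ≤ chrom G, n = symChromT G σ t}

/-- Switching a signature at the vertex set `X = {v | X v = true}`:
the sign of every edge with exactly one end in `X` is reversed. -/
def switch (X : V → Bool) (σ : Sym2 V → Bool) : Sym2 V → Bool :=
  fun e =>
    xor (Sym2.lift ⟨fun u v => xor (X u) (X v), fun u v => by simp [Bool.xor_comm]⟩ e) (σ e)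

/-- Two signatures of `G` are equivalent if one is obtained from the other by a
switching (equality of signs is only required on the edges of `G`). -/
def Equivalent (G : SimpleGraph V) (σ σ' : Sym2 V → Bool) : Prop :=
  ∃ X : V → Bool, ∀ e ∈ G.edgeSet, σ' e = switch X σ e

/-- The number of negative edges of a closed walk. -/
def negCount (σ : Sym2 V → Bool) {G : SimpleGraph V} {u : V} (w : G.Walk u u) : ℕ :=
  (w.edges.filter (fun e => !σ e)).length

/-- `(G, σ)` is balanced: every circuit has sign `+1`,
i.e. an even number of negative edges. -/
def Balanced (G : SimpleGraph V) (σ : Sym2 V → Bool) : Prop :=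
  ∀ ⦃u : V⦄ (w : G.Walk u u), w.IsCycle → Even (negCount σ w)

/-- `(G, σ)` is antibalanced: every even circuit has sign `+1` and every odd
circuit has sign `-1`. -/
def Antibalanced (G : SimpleGraph V) (σ : Sym2 V → Bool) : Prop :=
  ∀ ⦃u : V⦄ (w : G.Walk u u), w.IsCycle → (Even w.length ↔ Even (negCount σ w))

/-- Restriction of a signature to (the induced subgraph on) a vertex subset. -/
def restrict (σ : Sym2 V → Bool) (s : Set V) : Sym2 s → Bool :=
  fun e => σ (Sym2.map Subtype.val e)

/-- A circuit: a connected 2-regular graph. -/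
def IsCircuit (G : SimpleGraph V) [Fintype V] [DecidableRel G.Adj] : Prop :=
  G.Connected ∧ G.IsRegularOfDegree 2

/-- The frustration index `l(G, σ)`: the least number of edges whose deletion
makes the signed graph balanced. -/
noncomputable def frustrationIndex (G : SimpleGraph V) (σ : Sym2 V → Bool) : ℕ :=
  sInf {n | ∃ F : Finset (Sym2 V), F.card = n ∧ Balanced (G.deleteEdges ↑F) σ}

/-- A proper coloring of the signed expansion `±G` (each edge of `G` replaced by
a positive and a negative parallel edge): for each edge `vw` of `G`,
`c v ∉ {c w, -c w}`. -/
def IsProperExpColoring (G : SimpleGraph V) {t k : ℕ} (c : V → Sym t k) : Prop :=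
  ∀ ⦃v w : V⦄, G.Adj v w → c v ≠ c w ∧ c v ≠ symNeg (c w)

/-- The symset `t`-chromatic number of the signed expansion `±G`. -/
noncomputable def expSymChromT (G : SimpleGraph V) (t : ℕ) : ℕ :=
  sInf {n | ∃ k, n = t + 2 * k ∧ ∃ c : V → Sym t k, IsProperExpColoring G c}

end SymSet


/-!
For the upper bound, color `G` properly with `k` colors, send `t` of them to the self-inverse
elements and the others to one element of each pair: adjacent vertices then get colors that are
neither equal nor opposite, which is proper for every signature. Such colorings are exactly the
proper colorings of `±G`, and forgetting signs turns them into proper colorings of `G` with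
`t + k'` colors, which gives the value for `±G`.

The sharp example is the complete `k`-partite graph with parts of size `k`, the edge between
positions `a` and `b` of parts `i < j` being positive iff `a ≤ b`. A self-inverse color class is
independent, hence has at most `k` vertices. In a class `{s, -s}` put the vertex at position `a`
at the point `a` or `a + k` of `ℤ/2k` according as it is colored `s` or `-s`; properness says that
every vertex of a later part lies at distance `1` to `k` behind every vertex of an earlier part,
and this leaves room for at most `k + 1` points. Counting the `k²` vertices gives `t + k' ≥ k`.
-/

namespace SymSet

section

open Finset SimpleGraph

variable {V W : Type*} {t k : ℕ}

def symClass : Sym t k → Fin t ⊕ Fin k := Sum.map id Prod.fst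

def symBit : Sym t k → Bool
  | .inl _ => false
  | .inr (_, b) => b

def ofSymClass : Fin t ⊕ Fin k → Sym t k := Sum.map id (·, true)

@[simp] lemma symClass_ofSymClass (x : Fin t ⊕ Fin k) : symClass (ofSymClass x) = x := by
  cases x <;> rfl

@[simp] lemma symClass_eq_inl {x : Sym t k} {i : Fin t} : symClass x = .inl i ↔ x = .inl i := by
  rcases x with j | ⟨j, b⟩ <;> simp [symClass]

lemma eq_inr_of_symClass_eq_inr {x : Sym t k} {o : Fin k} (h : symClass x = .inr o) :
    x = .inr (o, symBit x) := by
  rcases x with j | ⟨j, b⟩ <;> simp_all [symClass, symBit]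

lemma symClass_eq_symClass_iff {x y : Sym t k} :
    symClass x = symClass y ↔ x = y ∨ x = symNeg y := by
  rcases x with i | ⟨i, _ | _⟩ <;> rcases y with j | ⟨j, _ | _⟩ <;> simp [symClass, symNeg]

@[simp] lemma signAct_inl (s : Bool) (i : Fin t) : signAct s (.inl i : Sym t k) = .inl i := by
  cases s <;> rfl

lemma signAct_inr (s : Bool) (o : Fin k) (b : Bool) :
    signAct s (.inr (o, b) : Sym t k) = .inr (o, if s then b else !b) := by
  cases s <;> rfl

section Expansion

variable {G : SimpleGraph V}

lemma isProperExpColoring_iff {c : V → Sym t k} :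
    IsProperExpColoring G c ↔ ∀ ⦃v w⦄, G.Adj v w → symClass (c v) ≠ symClass (c w) := by
  simp only [IsProperExpColoring, ne_eq, symClass_eq_symClass_iff, not_or]

lemma IsProperExpColoring.isProperColoring {c : V → Sym t k} (hc : IsProperExpColoring G c)
    (σ : Sym2 V → Bool) : IsProperColoring G σ c := by
  intro v w hvw
  cases σ s(v, w)
  exacts [(hc hvw).2, (hc hvw).1]

theorem exists_isProperExpColoring_iff :
    (∃ c : V → Sym t k, IsProperExpColoring G c) ↔ G.Colorable (t + k) := by
  simp_rw [isProperExpColoring_iff]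
  constructor
  · rintro ⟨c, hc⟩
    simpa using (Coloring.mk (symClass ∘ c) fun h => hc h).colorable
  · rintro ⟨C⟩
    exact ⟨ofSymClass ∘ finSumFinEquiv.symm ∘ C, fun v w hvw => by simpa using C.valid hvw⟩

lemma symColorable_of_colorable {K : ℕ} (hG : G.Colorable K) (ht : t ≤ K) (σ : Sym2 V → Bool) :
    SymColorable G σ t (K - t) := by
  obtain ⟨c, hc⟩ := exists_isProperExpColoring_iff.2 ((Nat.add_sub_cancel' ht).symm ▸ hG)
  exact ⟨c, hc.isProperColoring σ⟩

end Expansion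

lemma colorable_chrom [Finite V] (G : SimpleGraph V) : G.Colorable (chrom G) :=
  G.colorable_chromaticNumber_of_fintype

lemma chrom_le_of_colorable {G : SimpleGraph V} {n : ℕ} (h : G.Colorable n) : chrom G ≤ n :=
  ENat.toNat_le_of_le_natCast h.chromaticNumber_le

lemma chrom_congr {G : SimpleGraph V} {G' : SimpleGraph W} (e : G ≃g G') : chrom G = chrom G' := by
  rw [chrom, chrom, le_antisymm (chromaticNumber_mono_of_hom e.toHom)
    (chromaticNumber_mono_of_hom e.symm.toHom)]

lemma sInf_add_two_mul_eq {P : ℕ → Prop} {K : ℕ} (ht : t ≤ K) (hP : P (K - t))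
    (hmin : ∀ k, P k → K ≤ t + k) : sInf {n | ∃ k, n = t + 2 * k ∧ P k} = 2 * K - t := by
  refine le_antisymm (Nat.sInf_le ⟨K - t, by omega, hP⟩) (le_csInf ⟨_, K - t, rfl, hP⟩ ?_)
  rintro _ ⟨k, rfl, hk⟩
  have := hmin k hk
  omega

lemma symColorable_comap_equiv (e : V ≃ W) (G : SimpleGraph W) (σ : Sym2 W → Bool) :
    SymColorable (G.comap e) (σ ∘ Sym2.map e) t k ↔ SymColorable G σ t k := by
  constructor
  · rintro ⟨c, hc⟩
    refine ⟨c ∘ e.symm, fun v w hvw => ?_⟩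
    simpa using hc (v := e.symm v) (w := e.symm w) (by simpa using hvw)
  · rintro ⟨c, hc⟩
    exact ⟨c ∘ e, fun v w hvw => hc hvw⟩

lemma exists_fin_copy [Fintype W] (G : SimpleGraph W) (σ : Sym2 W → Bool) (t : ℕ) :
    ∃ (m : ℕ) (H : SimpleGraph (Fin m)) (σH : Sym2 (Fin m) → Bool),
      chrom H = chrom G ∧ symChromT H σH t = symChromT G σ t := by
  let e := (Fintype.equivFin W).symm
  refine ⟨_, G.comap e, σ ∘ Sym2.map e, chrom_congr (Iso.comap e G), ?_⟩
  simp only [symChromT, symColorable_comap_equiv]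

/-- `x - y` in `ℤ/2k`, for `x, y < 2k`. -/
def circSub (k x y : ℕ) : ℕ := if y ≤ x then x - y else x + 2 * k - y

lemma circSub_lt {x : ℕ} (y : ℕ) (hx : x < 2 * k) : circSub k x y < 2 * k := by
  unfold circSub; split_ifs <;> omega

@[simp] lemma circSub_self (k x : ℕ) : circSub k x x = 0 := by
  simp [circSub]

lemma circSub_inj {x y z : ℕ} (hx : x < 2 * k) (hy : y < 2 * k) (hz : z < 2 * k)
    (h : circSub k x z = circSub k y z) : x = y := by
  unfold circSub at h; split_ifs at h <;> omega

lemma circSub_lt_or_add_le {x y z : ℕ} (hz : z < 2 * k)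
    (hxy : 1 ≤ circSub k x y ∧ circSub k x y ≤ k) :
    circSub k y z < circSub k x z ∨ circSub k x z + k ≤ circSub k y z := by
  unfold circSub at *; split_ifs at * <;> omega

theorem card_le_of_circSub {α ι : Type*} [LinearOrder ι] {T : Finset α} {part : α → ι}
    {p : α → ℕ} (hp : ∀ u ∈ T, p u < 2 * k)
    (hinj : ∀ u ∈ T, ∀ v ∈ T, part u = part v → p u = p v → u = v)
    (hbehind : ∀ u ∈ T, ∀ v ∈ T, part u < part v →
      1 ≤ circSub k (p u) (p v) ∧ circSub k (p u) (p v) ≤ k)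
    {x y : α} (hx : x ∈ T) (hy : y ∈ T) (hxy : part x < part y) : #T ≤ k + 1 := by
  obtain ⟨u₀, hu₀, hmin⟩ := T.exists_min_image part ⟨x, hx⟩
  set d := fun u => circSub k (p u) (p y)
  -- measured from `y`, the first part lies in `[1, d m]`, later parts in `[0, d m) ∪ [d m + k, 2k)`
  obtain ⟨m, hmA, hmax⟩ := (T.filter (part · = part u₀)).exists_max_image d
    ⟨u₀, mem_filter.2 ⟨hu₀, rfl⟩⟩
  obtain ⟨hmT, hm⟩ := mem_filter.1 hmA
  have hdm : d m ≤ k := (hbehind m hmT y hy (hm ▸ (hmin x hx).trans_lt hxy)).2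
  have hsplit : ∀ u ∈ T, d u ≤ d m ∨ d m + k ≤ d u := by
    intro u hu
    by_cases hu₀ : part u = part u₀
    · exact .inl (hmax u (mem_filter.2 ⟨hu, hu₀⟩))
    · have : d u < d m ∨ d m + k ≤ d u := circSub_lt_or_add_le (hp y hy)
        (hbehind m hmT u hu (hm ▸ lt_of_le_of_ne (hmin u hu) (Ne.symm hu₀)))
      omega
  have hdinj : Set.InjOn d T := by
    intro u hu v hv huv
    have hpuv : p u = p v := circSub_inj (hp u hu) (hp v hv) (hp y hy) huv
    rcases lt_trichotomy (part u) (part v) with h | h | h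
    · have := (hbehind u hu v hv h).1
      rw [hpuv, circSub_self] at this
      omega
    · exact hinj u hu v hv h hpuv
    · have := (hbehind v hv u hu h).1
      rw [hpuv, circSub_self] at this
      omega
  calc #T ≤ #(range (d m + 1) ∪ Ico (d m + k) (2 * k)) := by
        refine card_le_card_of_injOn d (fun u hu => ?_) hdinj
        have : d u < 2 * k := circSub_lt (p y) (hp u hu)
        simp only [coe_union, coe_range, coe_Ico, Set.mem_union, Set.mem_Iio, Set.mem_Ico]
        rcases hsplit u hu with h | h <;> [left; right] <;> omega
    _ ≤ #(range (d m + 1)) + #(Ico (d m + k) (2 * k)) := card_union_le _ _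
    _ = k + 1 := by simp only [card_range, Nat.card_Ico]; omega

section Equipartite

variable {k' : ℕ}

def orderSign (k : ℕ) : Sym2 (Fin k × Fin k) → Bool :=
  Sym2.lift ⟨fun u v => decide ((u.1 < v.1 → u.2 ≤ v.2) ∧ (v.1 < u.1 → v.2 ≤ u.2)),
    fun u v => by simp only [and_comm]⟩

lemma orderSign_of_lt {u v : Fin k × Fin k} (h : u.1 < v.1) :
    orderSign k s(u, v) = decide (u.2 ≤ v.2) := by
  simp [orderSign, h, lt_asymm h]

lemma card_le_of_injOn_snd {α : Type*} {s : Finset (α × Fin k)}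
    (h : Set.InjOn Prod.snd (s : Set (α × Fin k))) : #s ≤ k :=
  (card_le_card_of_injOn Prod.snd (fun _ _ => mem_coe.2 (mem_univ _)) h).trans_eq (card_fin k)

lemma card_filter_symClass_eq_inl_le {σ : Sym2 (Fin k × Fin k) → Bool}
    {c : Fin k × Fin k → Sym t k'} (hc : IsProperColoring (completeEquipartiteGraph k k) σ c)
    (i : Fin t) : #{v | symClass (c v) = .inl i} ≤ k := by
  refine card_le_of_injOn_snd fun u hu v hv h2 => ?_
  by_contra hne
  rw [mem_coe, mem_filter, symClass_eq_inl] at hu hv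
  exact hc (fun h1 => hne (Prod.ext h1 h2)) (by rw [hu.2, hv.2, signAct_inl])

def circPoint (k a : ℕ) (b : Bool) : ℕ := if b then a + k else a

lemma circPoint_lt {a : ℕ} (ha : a < k) (b : Bool) : circPoint k a b < 2 * k := by
  unfold circPoint; split_ifs <;> omega

lemma eq_of_circPoint_eq {a a' : ℕ} (ha : a < k) (ha' : a' < k) {b b' : Bool}
    (h : circPoint k a b = circPoint k a' b') : a = a' := by
  unfold circPoint at h; split_ifs at h <;> omega

lemma circSub_circPoint {a a' : ℕ} (ha : a < k) (ha' : a' < k) {b b' : Bool}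
    (h : b ≠ if a ≤ a' then b' else !b') :
    1 ≤ circSub k (circPoint k a b) (circPoint k a' b') ∧
      circSub k (circPoint k a b) (circPoint k a' b') ≤ k := by
  unfold circSub circPoint
  cases b <;> cases b' <;> by_cases haa' : a ≤ a' <;> simp_all <;> split_ifs <;> omega

lemma card_filter_symClass_eq_inr_le {c : Fin k × Fin k → Sym t k'}
    (hc : IsProperColoring (completeEquipartiteGraph k k) (orderSign k) c) (o : Fin k') :
    #{v | symClass (c v) = .inr o} ≤ k + 1 := by
  set T : Finset (Fin k × Fin k) := {v | symClass (c v) = .inr o}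
  have hcT : ∀ v ∈ T, c v = .inr (o, symBit (c v)) := fun v hv =>
    eq_inr_of_symClass_eq_inr (mem_filter.1 hv).2
  by_cases hparts : ∃ x ∈ T, ∃ y ∈ T, x.1 < y.1
  · obtain ⟨x, hx, y, hy, hxy⟩ := hparts
    refine card_le_of_circSub (part := Prod.fst) (p := fun v => circPoint k v.2 (symBit (c v)))
      (fun u _ => circPoint_lt u.2.isLt _) (fun u _ v _ h1 h2 => ?_) (fun u hu v hv huv => ?_)
      hx hy hxy
    · exact Prod.ext h1 (Fin.ext (eq_of_circPoint_eq u.2.isLt v.2.isLt h2))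
    · have hne : c u ≠ signAct (orderSign k s(u, v)) (c v) := hc huv.ne
      rw [orderSign_of_lt huv, hcT u hu, hcT v hv, signAct_inr] at hne
      apply circSub_circPoint u.2.isLt v.2.isLt
      simpa only [ne_eq, Sum.inr.injEq, Prod.mk.injEq, true_and, decide_eq_true_eq,
        Fin.le_iff_val_le_val] using hne
  · push Not at hparts
    refine (card_le_of_injOn_snd fun u hu v hv h2 => Prod.ext ?_ h2).trans k.le_succ
    rw [mem_coe] at hu hv
    exact le_antisymm (hparts v hv u hu) (hparts u hu v hv)

theorem not_symColorable_orderSign (h : t + k' < k) :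
    ¬ SymColorable (completeEquipartiteGraph k k) (orderSign k) t k' := by
  rintro ⟨c, hc⟩
  have hcount : k * k ≤ t * k + k' * (k + 1) := calc
    k * k = #(univ : Finset (Fin k × Fin k)) := by simp
    _ = ∑ o, #{v | symClass (c v) = o} := card_eq_sum_card_fiberwise fun _ _ => mem_univ _
    _ = ∑ i : Fin t, #{v | symClass (c v) = .inl i} +
          ∑ o : Fin k', #{v | symClass (c v) = .inr o} := Fintype.sum_sum_type _
    _ ≤ ∑ _i : Fin t, k + ∑ _o : Fin k', (k + 1) :=
      add_le_add (sum_le_sum fun i _ => card_filter_symClass_eq_inl_le hc i)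
        (sum_le_sum fun o _ => card_filter_symClass_eq_inr_le hc o)
    _ = t * k + k' * (k + 1) := by simp
  nlinarith [Nat.mul_le_mul_right k h]

lemma chrom_completeEquipartiteGraph (k : ℕ) : chrom (completeEquipartiteGraph k k) = k := by
  rw [chrom_congr (completeEquipartiteGraph.completeMultipartiteGraph (r := k) (t := k)), chrom,
    completeMultipartiteGraph.chromaticNumber (Function.const (Fin k) (Fin k)) fun i => i]
  simp

theorem symChromT_orderSign (ht : t ≤ k) :
    symChromT (completeEquipartiteGraph k k) (orderSign k) t = 2 * k - t := by
  have hcol := (colorable_chrom _).mono (chrom_completeEquipartiteGraph k).le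
  refine sInf_add_two_mul_eq ht (symColorable_of_colorable hcol ht _) fun k' hk' => ?_
  by_contra! h
  exact not_symColorable_orderSign h hk'

end Equipartite

end

/-- if `χ(G) = k` then for every `t ≤ k` and every signature
`σ`, `χ^t_sym(G,σ) ≤ 2k - t`; moreover `χ^t_sym(±G) = 2k - t` for the signed
expansion `±G`, and there exists a simple signed graph `(H, σ_H)` with
`χ(H) = k` and `χ^t_sym(H, σ_H) = 2k - t`. -/
theorem stmt4 {V : Type*} [Fintype V] (G : SimpleGraph V) (k : ℕ)
    (hk : chrom G = k) (t : ℕ) (ht : t ≤ k) :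
    (∀ σ : Sym2 V → Bool, symChromT G σ t ≤ 2 * k - t) ∧
    expSymChromT G t = 2 * k - t ∧
    (∃ (m : ℕ) (H : SimpleGraph (Fin m)) (σH : Sym2 (Fin m) → Bool),
      chrom H = k ∧ symChromT H σH t = 2 * k - t) := by
  have hG : G.Colorable k := hk ▸ colorable_chrom G
  refine ⟨fun σ => Nat.sInf_le ⟨k - t, by omega, symColorable_of_colorable hG ht σ⟩, ?_, ?_⟩
  · refine sInf_add_two_mul_eq ht (exists_isProperExpColoring_iff.2 ?_) fun k' hk' => ?_
    · rwa [Nat.add_sub_cancel' ht]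
    · exact hk ▸ chrom_le_of_colorable (exists_isProperExpColoring_iff.1 hk')
  · obtain ⟨m, H, σH, hH, hσH⟩ :=
      exists_fin_copy (SimpleGraph.completeEquipartiteGraph k k) (orderSign k) t
    exact ⟨m, H, σH, hH.trans (chrom_completeEquipartiteGraph k),
      hσH.trans (symChromT_orderSign ht)⟩

end SymSet
end

section
/- Let C_n be a circuit on n vertices and σ a signature of C_n, with t ≤ χ(C_n). If t ∈ {1,3}, then χ^t_sym(C_n,σ) = 3. If t ∈ {0,2}, then χ^t_sym(C_n,σ) ∈ {2,4}, and χ^t_sym(C_n,σ) = 4 if and only if one of the following holds: (i) (C_n,σ) is a balanced odd circuit; (ii) (C_n,σ) is an unbalanced even circuit and t = 0; (iii) (C_n,σ) is an unbalanced odd circuit and t = 2. -/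
/-!
A circuit is a single Hamiltonian cycle `e 0, e 1, …, e (n - 1), e 0` with `n ≥ 3`, so a proper
coloring is a sequence of colors `x i` with `x (i + 1) ≠ (sign of the edge {i, i + 1}) · x i`.
With at least three colors such a sequence is built greedily along the cycle; with one color or
none it cannot exist. When the symmetric set has exactly two elements (`S_0^2` or `S_2^0`), the
condition prescribes the difference `x (i + 1) - x i` in `ZMod 2` (always `1` for `S_0^2`, `1`
exactly on positive edges for `S_2^0`), and prescribed differences can be integrated around the
cycle iff they sum to `0`: `n` is even, resp. the number of positive edges is even. Likewise
`(C_n, σ)` is balanced iff its number of negative edges is even, and everything is decided by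
parity, since positive plus negative edges make `n`.
-/

theorem Fin.exists_add_one_eq_add_iff_sum_eq_zero {A : Type*} [AddCommGroup A] {n : ℕ} [NeZero n]
    (d : Fin n → A) : (∃ p : Fin n → A, ∀ i, p (i + 1) = p i + d i) ↔ ∑ i, d i = 0 := by
  constructor
  · rintro ⟨p, hp⟩
    have hshift : ∑ i, p (i + 1) = ∑ i, p i := Equiv.sum_comp (Equiv.addRight 1) p
    simpa only [hp, Finset.sum_add_distrib, add_eq_left] using hshift
  · intro hd
    obtain ⟨m, rfl⟩ : ∃ m, n = m + 1 := Nat.exists_eq_add_one.mpr (Nat.pos_of_neZero n)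
    refine ⟨fun i => Fin.partialSum d i.castSucc, fun i => ?_⟩
    dsimp only
    induction i using Fin.lastCases with
    | last =>
      rw [Fin.last_add_one, Fin.castSucc_zero, Fin.partialSum_zero, ← Fin.partialSum_succ,
        Fin.succ_last, Fin.partialSum, Fin.val_last, List.take_of_length_le (by simp),
        List.sum_ofFn, hd]
    | cast j =>
      rw [Fin.coeSucc_eq_succ, ← Fin.succ_castSucc, Fin.partialSum_succ]

namespace SimpleGraph.Walk

variable {V : Type*} {G : SimpleGraph V}

theorem edges_eq_ofFn {u v : V} (p : G.Walk u v) :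
    p.edges = List.ofFn fun i : Fin p.length => s(p.getVert i, p.getVert (i + 1)) :=
  List.ext_getElem (by simp) fun i _ _ => by simp [getElem_edges]

theorem getVert_val_add_one {u : V} (p : G.Walk u u) [NeZero p.length] (i : Fin p.length) :
    p.getVert ↑(i + 1) = p.getVert (↑i + 1) := by
  rcases (Nat.succ_le_of_lt i.isLt).lt_or_eq with h | h
  · rw [Fin.val_add_one_of_lt' h]
  · replace h : (i : ℕ) + 1 = p.length := h
    have h0 : i + 1 = 0 := Fin.ext (by rw [Fin.val_add, Fin.val_one', Nat.add_mod_mod, h]; simp)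
    rw [h0, h, Fin.val_zero, getVert_zero, getVert_length]

theorem IsCycle.bijective_getVert {u : V} {p : G.Walk u u} (hp : p.IsCycle)
    (hcover : ∀ x, x ∈ p.support) : Function.Bijective fun i : Fin p.length => p.getVert i := by
  refine ⟨fun i j hij => Fin.ext (hp.getVert_injOn' ?_ ?_ hij), fun x => ?_⟩
  · simp only [Set.mem_ofPred_eq]; omega
  · simp only [Set.mem_ofPred_eq]; omega
  obtain ⟨m, hm, hle⟩ := mem_support_iff_exists_getVert.mp (hcover x)
  rcases hle.lt_or_eq with hlt | rfl
  · exact ⟨⟨m, hlt⟩, hm⟩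
  · exact ⟨⟨0, hp.three_le_length.trans_lt' (by norm_num)⟩, by simpa using hm⟩

theorem sum_map_edges_eq_sub {A : Type*} [AddCommGroup A] {φ : Sym2 V → A} {P : V → A}
    (hP : ∀ ⦃x y⦄, G.Adj x y → φ s(x, y) = P y - P x) {u v : V} (w : G.Walk u v) :
    (w.edges.map φ).sum = P v - P u := by
  induction w with
  | nil => simp
  | cons h q ih => rw [edges_cons, List.map_cons, List.sum_cons, ih, hP h]; abel

end SimpleGraph.Walk

open SimpleGraph

namespace SymSet

theorem signAct_involutive {t k : ℕ} (s : Bool) :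
    Function.Involutive (signAct (t := t) (k := k) s) := by
  intro x
  cases s <;> rcases x with i | ⟨i, b⟩ <;> simp [signAct, symNeg]

theorem ne_signAct_comm {t k : ℕ} {s : Bool} {x y : Sym t k} :
    x ≠ signAct s y ↔ y ≠ signAct s x := by
  rw [ne_eq, ne_eq, ← (signAct_involutive s).eq_iff, eq_comm]

theorem card_sym (t k : ℕ) : Fintype.card (Sym t k) = t + 2 * k := by
  simp [mul_comm]

theorem exists_ne_ne_of_three_le {t k : ℕ} (h : 3 ≤ t + 2 * k) (a b : Sym t k) :
    ∃ c, c ≠ a ∧ c ≠ b := by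
  classical
  obtain ⟨c, -, hc⟩ := Finset.exists_mem_notMem_of_card_lt_card (s := {a, b}) (t := Finset.univ)
    (Finset.card_le_two.trans_lt (by rw [Finset.card_univ, card_sym]; omega))
  simp only [Finset.mem_insert, Finset.mem_singleton, not_or] at hc
  exact ⟨c, hc⟩

/-- Proper colorings of the signed circuit on `Fin n` whose edge `{i, i + 1}` has sign `s i`. -/
def IsProperCycleColoring {n t k : ℕ} [NeZero n] (s : Fin n → Bool) (x : Fin n → Sym t k) :
    Prop :=
  ∀ i, x (i + 1) ≠ signAct (s i) (x i)

theorem exists_isProperCycleColoring {n t k : ℕ} [NeZero n] (hn : 2 ≤ n) (htk : 3 ≤ t + 2 * k)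
    (s : Fin n → Bool) : ∃ x : Fin n → Sym t k, IsProperCycleColoring s x := by
  obtain ⟨m, rfl⟩ : ∃ m, n = m + 2 := ⟨n - 2, by omega⟩
  choose pick hpick using exists_ne_ne_of_three_le htk
  obtain ⟨a⟩ : Nonempty (Sym t k) := Fintype.card_pos_iff.mp (by rw [card_sym]; omega)
  -- every new color also avoids the one that the closing edge `{last, 0}` forbids next to `a`
  let x : Fin (m + 2) → Sym t k := Fin.induction a fun j xj =>
    pick (signAct (s j.castSucc) xj) (signAct (s (Fin.last _)) a)
  refine ⟨x, fun i => ?_⟩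
  induction i using Fin.lastCases with
  | last =>
    rw [Fin.last_add_one, ne_signAct_comm, ← Fin.succ_last]
    exact (hpick _ _).2
  | cast j =>
    rw [Fin.coeSucc_eq_succ]
    exact (hpick _ _).1

theorem exists_isProperCycleColoring_iff_of_equiv {n t k : ℕ} [NeZero n] {A : Type*}
    [AddCommGroup A] (code : Sym t k ≃ A) (d : Bool → A)
    (hcode : ∀ b x y, y ≠ signAct b x ↔ code y = code x + d b) (s : Fin n → Bool) :
    (∃ x : Fin n → Sym t k, IsProperCycleColoring s x) ↔ ∑ i, d (s i) = 0 := by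
  rw [← Fin.exists_add_one_eq_add_iff_sum_eq_zero]
  constructor
  · rintro ⟨x, hx⟩
    exact ⟨code ∘ x, fun i => (hcode _ _ _).mp (hx i)⟩
  · rintro ⟨p, hp⟩
    exact ⟨code.symm ∘ p, fun i => (hcode _ _ _).mpr (by simpa using hp i)⟩

theorem exists_isProperCycleColoring_two_zero_iff {n : ℕ} [NeZero n] (s : Fin n → Bool) :
    (∃ x : Fin n → Sym 2 0, IsProperCycleColoring s x) ↔ Even n := by
  rw [exists_isProperCycleColoring_iff_of_equiv (A := ZMod 2) (Equiv.sumEmpty _ _) (fun _ => 1)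
    (by decide), Finset.sum_const, Finset.card_univ, Fintype.card_fin, nsmul_eq_mul, mul_one,
    ZMod.natCast_eq_zero_iff_even]

theorem exists_isProperCycleColoring_zero_one_iff {n : ℕ} [NeZero n] (s : Fin n → Bool) :
    (∃ x : Fin n → Sym 0 1, IsProperCycleColoring s x) ↔
      ∑ i, (if s i then 1 else 0 : ZMod 2) = 0 :=
  exists_isProperCycleColoring_iff_of_equiv
    ((Equiv.emptySum _ _).trans ((Equiv.uniqueProd _ _).trans finTwoEquiv.symm))
    (fun b => if b then 1 else 0) (by decide) s

section SignedGraph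

variable {V : Type*} {G : SimpleGraph V} {σ : Sym2 V → Bool}

theorem natCast_negCount {u : V} (w : G.Walk u u) :
    (negCount σ w : ZMod 2) = (w.edges.map fun e => if σ e then 0 else 1).sum := by
  unfold negCount
  induction w.edges with
  | nil => simp
  | cons e l ih => cases h : σ e <;> simp [h, ih, add_comm]

theorem symChromT_eq_of_symColorable {t k : ℕ} (h : SymColorable G σ t k)
    (hlt : ∀ j < k, ¬ SymColorable G σ t j) : symChromT G σ t = t + 2 * k := by
  refine le_antisymm (Nat.sInf_le ⟨k, rfl, h⟩) (le_csInf ⟨_, k, rfl, h⟩ ?_)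
  rintro _ ⟨j, rfl, hj⟩
  by_contra! hjk
  exact hlt j (by omega) hj

theorem not_symColorable_zero_zero [Nonempty V] : ¬ SymColorable G σ 0 0 := by
  rintro ⟨c, -⟩
  rcases c (Classical.arbitrary V) with i | ⟨i, -⟩ <;> exact i.elim0

theorem not_symColorable_one_zero {v w : V} (h : G.Adj v w) : ¬ SymColorable G σ 1 0 := by
  rintro ⟨c, hc⟩
  have : Subsingleton (Sym 1 0) := Fintype.card_le_one_iff_subsingleton.mp (card_sym 1 0).le
  exact hc h (Subsingleton.elim _ _)

theorem IsCircuit.exists_spanning_isCycle [Fintype V] [DecidableRel G.Adj] (hG : IsCircuit G) :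
    ∃ (u : V) (p : G.Walk u u), p.IsCycle ∧ (∀ x, x ∈ p.support) ∧
      ∀ x y, G.Adj x y ↔ s(x, y) ∈ p.edges := by
  obtain ⟨hconn, hreg⟩ := hG
  have hncard : ∀ v, (G.neighborSet v).ncard = 2 := fun v => by
    rw [← Nat.card_coe_set_eq, Nat.card_eq_fintype_card, card_neighborSet_eq_degree, hreg v]
  have hcycles : G.IsCycles := fun v _ => hncard v
  obtain ⟨u⟩ := hconn.nonempty
  obtain ⟨p, hp, hverts⟩ := hcycles.exists_cycle_toSubgraph_verts_eq_connectedComponentSupp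
    (c := G.connectedComponentMk u) rfl (Set.nonempty_of_ncard_ne_zero (by rw [hncard]; norm_num))
  have hcover : ∀ x, x ∈ p.support := fun x => by
    rw [← Walk.mem_verts_toSubgraph, hverts, ConnectedComponent.mem_supp_iff,
      ConnectedComponent.eq]
    exact hconn.preconnected x u
  refine ⟨u, p, hp, hcover, fun x y => ?_⟩
  rw [← Walk.adj_toSubgraph_iff_mem_edges,
    hp.adj_toSubgraph_iff_of_isCycles hcycles (p.mem_verts_toSubgraph.mpr (hcover x))]

theorem IsCircuit.exists_cyclic_enumeration [Fintype V] [DecidableRel G.Adj] (hG : IsCircuit G) :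
    ∃ (n : ℕ) (_ : NeZero n) (e : Fin n ≃ V), 3 ≤ n ∧ ∃ (u : V) (p : G.Walk u u), p.IsCycle ∧
      p.edges = List.ofFn (fun i => s(e i, e (i + 1))) ∧
      ∀ x y, G.Adj x y ↔ ∃ i, s(e i, e (i + 1)) = s(x, y) := by
  obtain ⟨u, p, hp, hcover, hadj⟩ := hG.exists_spanning_isCycle
  have : NeZero p.length := ⟨hp.not_nil ∘ Walk.length_eq_zero_iff.mp⟩
  let e := Equiv.ofBijective _ (hp.bijective_getVert hcover)
  have hedges : p.edges = List.ofFn (fun i => s(e i, e (i + 1))) := by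
    rw [Walk.edges_eq_ofFn]
    simp only [e, Equiv.ofBijective_apply, Walk.getVert_val_add_one]
  refine ⟨p.length, this, e, hp.three_le_length, u, p, hp, hedges, fun x y => ?_⟩
  rw [hadj, hedges, List.mem_ofFn]

section CyclicEnumeration

variable {n : ℕ} [NeZero n] {e : Fin n ≃ V}

theorem symColorable_iff_exists_isProperCycleColoring
    (he : ∀ x y, G.Adj x y ↔ ∃ i, s(e i, e (i + 1)) = s(x, y)) {t k : ℕ} :
    SymColorable G σ t k ↔
      ∃ x : Fin n → Sym t k, IsProperCycleColoring (fun i => σ s(e i, e (i + 1))) x := by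
  constructor
  · rintro ⟨c, hc⟩
    exact ⟨c ∘ e, fun i => ne_signAct_comm.mp (hc ((he _ _).mpr ⟨i, rfl⟩))⟩
  · rintro ⟨x, hx⟩
    refine ⟨x ∘ e.symm, fun v w hvw => ?_⟩
    obtain ⟨i, hi⟩ := (he v w).mp hvw
    rcases Sym2.eq_iff.mp hi with ⟨rfl, rfl⟩ | ⟨rfl, rfl⟩
    · simpa [ne_signAct_comm] using hx i
    · simpa [Sym2.eq_swap] using hx i

theorem balanced_iff_sum_eq_zero (he : ∀ x y, G.Adj x y ↔ ∃ i, s(e i, e (i + 1)) = s(x, y))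
    {u : V} {p : G.Walk u u} (hp : p.IsCycle)
    (hpe : p.edges = List.ofFn fun i => s(e i, e (i + 1))) :
    Balanced G σ ↔ ∑ i, (if σ s(e i, e (i + 1)) then 0 else 1 : ZMod 2) = 0 := by
  constructor
  · intro hbal
    have := ZMod.natCast_eq_zero_iff_even.mpr (hbal p hp)
    rwa [natCast_negCount, hpe, List.map_ofFn, List.sum_ofFn] at this
  · intro hsum w₀ w _
    obtain ⟨q, hq⟩ := (Fin.exists_add_one_eq_add_iff_sum_eq_zero _).mpr hsum
    -- switching at `{v | q (e.symm v) = 1}` makes every edge positive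
    have hP : ∀ ⦃x y⦄, G.Adj x y →
        (if σ s(x, y) then 0 else 1 : ZMod 2) = q (e.symm y) - q (e.symm x) := by
      intro x y hxy
      obtain ⟨i, hi⟩ := (he x y).mp hxy
      rcases Sym2.eq_iff.mp hi with ⟨rfl, rfl⟩ | ⟨rfl, rfl⟩
      · simp [hq]
      · simp [hq, Sym2.eq_swap, CharTwo.sub_eq_add, ← add_assoc, CharTwo.add_self_eq_zero]
    rw [← ZMod.natCast_eq_zero_iff_even, natCast_negCount, w.sum_map_edges_eq_sub hP, sub_self]

theorem symChromT_three_eq_three (he : ∀ x y, G.Adj x y ↔ ∃ i, s(e i, e (i + 1)) = s(x, y))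
    (hn : 2 ≤ n) : symChromT G σ 3 = 3 :=
  symChromT_eq_of_symColorable (k := 0) ((symColorable_iff_exists_isProperCycleColoring he).mpr
    (exists_isProperCycleColoring hn le_rfl _)) (by simp)

theorem symChromT_one_eq_three (he : ∀ x y, G.Adj x y ↔ ∃ i, s(e i, e (i + 1)) = s(x, y))
    (hn : 2 ≤ n) : symChromT G σ 1 = 3 :=
  symChromT_eq_of_symColorable (k := 1) ((symColorable_iff_exists_isProperCycleColoring he).mpr
    (exists_isProperCycleColoring hn le_rfl _)) fun j hj => by
      obtain rfl : j = 0 := by omega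
      exact not_symColorable_one_zero ((he _ _).mpr ⟨0, rfl⟩)

theorem symChromT_two_eq (he : ∀ x y, G.Adj x y ↔ ∃ i, s(e i, e (i + 1)) = s(x, y))
    (hn : 2 ≤ n) : symChromT G σ 2 = if Even n then 2 else 4 := by
  have h20 := (symColorable_iff_exists_isProperCycleColoring he (σ := σ) (t := 2) (k := 0)).trans
    (exists_isProperCycleColoring_two_zero_iff _)
  split_ifs with heven
  · exact symChromT_eq_of_symColorable (k := 0) (h20.mpr heven) (by simp)
  · refine symChromT_eq_of_symColorable (k := 1)
      ((symColorable_iff_exists_isProperCycleColoring he).mpr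
        (exists_isProperCycleColoring hn (by norm_num) _)) fun j hj => ?_
    obtain rfl : j = 0 := by omega
    exact fun h => heven (h20.mp h)

theorem symChromT_zero_eq (he : ∀ x y, G.Adj x y ↔ ∃ i, s(e i, e (i + 1)) = s(x, y))
    (hn : 2 ≤ n) : symChromT G σ 0 =
      if ∑ i, (if σ s(e i, e (i + 1)) then 1 else 0 : ZMod 2) = 0 then 2 else 4 := by
  have : Nonempty V := ⟨e 0⟩
  have h01 := (symColorable_iff_exists_isProperCycleColoring he (σ := σ) (t := 0) (k := 1)).trans
    (exists_isProperCycleColoring_zero_one_iff _)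
  split_ifs with hpos
  · refine symChromT_eq_of_symColorable (k := 1) (h01.mpr hpos) fun j hj => ?_
    obtain rfl : j = 0 := by omega
    exact not_symColorable_zero_zero
  · refine symChromT_eq_of_symColorable (k := 2)
      ((symColorable_iff_exists_isProperCycleColoring he).mpr
        (exists_isProperCycleColoring hn (by norm_num) _)) fun j hj => ?_
    interval_cases j
    · exact not_symColorable_zero_zero
    · exact fun h => hpos (h01.mp h)

end CyclicEnumeration

end SignedGraph

theorem stmt8_general {V : Type*} [Fintype V] (G : SimpleGraph V) [DecidableRel G.Adj]
    (hG : IsCircuit G) (σ : Sym2 V → Bool) (t : ℕ) :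
    ((t = 1 ∨ t = 3) → symChromT G σ t = 3) ∧
    ((t = 0 ∨ t = 2) →
      (symChromT G σ t = 2 ∨ symChromT G σ t = 4) ∧
      (symChromT G σ t = 4 ↔
        (Odd (Fintype.card V) ∧ Balanced G σ) ∨
        (Even (Fintype.card V) ∧ ¬ Balanced G σ ∧ t = 0) ∨
        (Odd (Fintype.card V) ∧ ¬ Balanced G σ ∧ t = 2))) := by
  obtain ⟨n, _, e, hn, u, p, hp, hpe, he⟩ := hG.exists_cyclic_enumeration
  replace hn : 2 ≤ n := by omega
  have hcard : Fintype.card V = n := by simpa using (Fintype.card_congr e).symm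
  set pos := ∑ i, (if σ s(e i, e (i + 1)) then 1 else 0 : ZMod 2) with hpos
  set neg := ∑ i, (if σ s(e i, e (i + 1)) then 0 else 1 : ZMod 2) with hneg
  have hsplit : (n : ZMod 2) = pos + neg := by
    rw [hpos, hneg, ← Finset.sum_add_distrib]
    simp [apply_ite₂ (· + ·)]
  refine ⟨?_, ?_⟩
  · rintro (rfl | rfl)
    exacts [symChromT_one_eq_three he hn, symChromT_three_eq_three he hn]
  rintro (rfl | rfl) <;>
    simp only [symChromT_zero_eq he hn, symChromT_two_eq he hn, hcard,
      balanced_iff_sum_eq_zero he hp hpe, ← Nat.not_even_iff_odd,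
      ← ZMod.natCast_eq_zero_iff_even, hsplit, ← hpos, ← hneg] <;>
    generalize pos = a, neg = b <;> revert a b <;> decide

/-- Brooks' type theorem for circuits.
For a circuit `C_n` on `n` vertices with signature `σ` and `t ≤ χ(C_n)`:
if `t ∈ {1,3}` then `χ^t_sym(C_n,σ) = 3`; if `t ∈ {0,2}` then
`χ^t_sym(C_n,σ) ∈ {2,4}`, and it equals 4 iff `(C_n,σ)` is a balanced odd
circuit, an unbalanced even circuit with `t = 0`, or an unbalanced odd circuit
with `t = 2`. -/
theorem stmt8 {V : Type*} [Fintype V] (G : SimpleGraph V) [DecidableRel G.Adj]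
    (hG : IsCircuit G) (σ : Sym2 V → Bool) (t : ℕ) (ht : t ≤ chrom G) :
    ((t = 1 ∨ t = 3) → symChromT G σ t = 3) ∧
    ((t = 0 ∨ t = 2) →
      (symChromT G σ t = 2 ∨ symChromT G σ t = 4) ∧
      (symChromT G σ t = 4 ↔
        (Odd (Fintype.card V) ∧ Balanced G σ) ∨
        (Even (Fintype.card V) ∧ ¬ Balanced G σ ∧ t = 0) ∨
        (Odd (Fintype.card V) ∧ ¬ Balanced G σ ∧ t = 2))) :=
  stmt8_general G hG σ t

end SymSet
end

section
/- Let (G,σ) be a signed graph with χ^t_sym(G,σ) = t + 2k. Then for each i ∈ {1,…,k}, (G,σ) contains a subgraph (H, σ|_H) with χ^t_sym(H, σ|_H) = t + 2i that is critical, i.e. χ^t_sym(H − v, σ|_{H−v}) < t + 2i for every vertex v of H. -/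
/-!
Among the subgraphs `H` of `(G, σ)` with `χ^t_sym(H) ≥ t + 2i` (there is one, `G` itself, as
`i ≤ k`) take a minimal one. By minimality every `H - v` has `χ^t_sym(H - v) < t + 2i`. Conversely,
a coloring of `H - v` extends to `H` by giving `v` a color from a new pair `{s, -s}`, so
`χ^t_sym(H) ≤ χ^t_sym(H - v) + 2`; since `χ^t_sym(H) ≡ t (mod 2)`, this forces
`χ^t_sym(H) = t + 2i`.
-/

namespace SymSet

section

variable {V W : Type*} {t m : ℕ}

theorem symColorable_natCard [Finite V] (G : SimpleGraph V) (σ : Sym2 V → Bool) (t : ℕ) :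
    SymColorable G σ t (Nat.card V) := by
  refine ⟨fun v => .inr (Finite.equivFin V v, true), fun v w hvw => ?_⟩
  cases σ s(v, w) <;> simp [signAct, symNeg, G.ne_of_adj hvw]

theorem symColorable_zero_of_isEmpty [IsEmpty V] (G : SimpleGraph V) (σ : Sym2 V → Bool)
    (t : ℕ) : SymColorable G σ t 0 :=
  ⟨isEmptyElim, fun v => isEmptyElim v⟩

theorem exists_symChromT_eq [Finite V] (G : SimpleGraph V) (σ : Sym2 V → Bool) (t : ℕ) :
    ∃ m, symChromT G σ t = t + 2 * m ∧ SymColorable G σ t m :=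
  Nat.sInf_mem (s := {n | ∃ k, n = t + 2 * k ∧ SymColorable G σ t k})
    ⟨_, _, rfl, symColorable_natCard G σ t⟩

theorem symChromT_le {G : SimpleGraph V} {σ : Sym2 V → Bool} (h : SymColorable G σ t m) :
    symChromT G σ t ≤ t + 2 * m :=
  Nat.sInf_le ⟨m, rfl, h⟩

theorem SymColorable.comap {G : SimpleGraph V} {G' : SimpleGraph W} {σ : Sym2 V → Bool}
    {σ' : Sym2 W → Bool} (f : G →g G') (hσ : ∀ ⦃u w⦄, G.Adj u w → σ' s(f u, f w) = σ s(u, w))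
    (h : SymColorable G' σ' t m) : SymColorable G σ t m := by
  obtain ⟨c, hc⟩ := h
  exact ⟨c ∘ f, fun u w huw => hσ huw ▸ hc (f.map_adj huw)⟩

theorem symChromT_le_of_hom [Finite W] {G : SimpleGraph V} {G' : SimpleGraph W}
    {σ : Sym2 V → Bool} {σ' : Sym2 W → Bool} (f : G →g G')
    (hσ : ∀ ⦃u w⦄, G.Adj u w → σ' s(f u, f w) = σ s(u, w)) :
    symChromT G σ t ≤ symChromT G' σ' t := by
  obtain ⟨m, hm, hc⟩ := exists_symChromT_eq G' σ' t
  exact hm ▸ symChromT_le (hc.comap f hσ)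

def Sym.castSucc : Sym t m → Sym t (m + 1) :=
  Sum.map id (Prod.map Fin.castSucc id)

theorem Sym.castSucc_injective : Function.Injective (Sym.castSucc : Sym t m → Sym t (m + 1)) :=
  Function.injective_id.sumMap ((Fin.castSucc_injective m).prodMap Function.injective_id)

theorem Sym.castSucc_signAct (s : Bool) (x : Sym t m) :
    Sym.castSucc (signAct s x) = signAct s (Sym.castSucc x) := by
  cases s <;> rcases x with _ | ⟨_, _⟩ <;> rfl

theorem Sym.castSucc_ne_signAct_last (s b : Bool) (x : Sym t m) :
    Sym.castSucc x ≠ signAct s (.inr (Fin.last m, b)) := by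
  cases s <;> rcases x with _ | ⟨_, _⟩ <;>
    simp [Sym.castSucc, signAct, symNeg, Fin.castSucc_ne_last]

theorem Sym.last_ne_signAct_castSucc (s b : Bool) (x : Sym t m) :
    (.inr (Fin.last m, b) : Sym t (m + 1)) ≠ signAct s (Sym.castSucc x) := by
  cases s <;> rcases x with _ | ⟨_, _⟩ <;>
    simp [Sym.castSucc, signAct, symNeg, (Fin.castSucc_ne_last _).symm]

theorem SymColorable.of_induce_compl_singleton {G : SimpleGraph V} {σ : Sym2 V → Bool} {v : V}
    (h : SymColorable (G.induce {v}ᶜ) (restrict σ {v}ᶜ) t m) : SymColorable G σ t (m + 1) := by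
  classical
  obtain ⟨c, hc⟩ := h
  refine ⟨fun w => if hw : w = v then .inr (Fin.last m, true) else Sym.castSucc (c ⟨w, hw⟩),
    fun u w huw => ?_⟩
  by_cases hu : u = v <;> by_cases hw : w = v <;> simp only [hu, hw, dite_true, dite_false]
  · exact absurd (hu.trans hw.symm) (G.ne_of_adj huw)
  · exact Sym.last_ne_signAct_castSucc _ _ _
  · exact Sym.castSucc_ne_signAct_last _ _ _
  · rw [← Sym.castSucc_signAct]
    exact Sym.castSucc_injective.ne (hc (v := ⟨u, hu⟩) (w := ⟨w, hw⟩) huw)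

theorem symChromT_le_symChromT_deleteVerts_add_two [Finite V] {G : SimpleGraph V}
    (σ : Sym2 V → Bool) (t : ℕ) {H : G.Subgraph} {v : V} (hv : v ∈ H.verts) :
    symChromT H.coe (restrict σ H.verts) t ≤
      symChromT (H.deleteVerts {v}).coe (restrict σ (H.deleteVerts {v}).verts) t + 2 := by
  obtain ⟨m, hm, hc⟩ := exists_symChromT_eq (H.deleteVerts {v}).coe
    (restrict σ (H.deleteVerts {v}).verts) t
  let f : H.coe.induce {⟨v, hv⟩}ᶜ →g (H.deleteVerts {v}).coe :=
    { toFun := fun w => ⟨w.1.1, w.1.2, fun h => w.2 (Subtype.ext h)⟩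
      map_rel' := fun {a b} hab => by
        have ha : a.1.1 ≠ v := fun h => a.2 (Subtype.ext h)
        have hb : b.1.1 ≠ v := fun h => b.2 (Subtype.ext h)
        simpa [ha, hb] using hab }
  have hH : SymColorable H.coe (restrict σ H.verts) t (m + 1) :=
    SymColorable.of_induce_compl_singleton (v := ⟨v, hv⟩) (hc.comap f fun _ _ _ => rfl)
  have := symChromT_le hH
  omega

theorem exists_subgraph_critical [Finite V] {G : SimpleGraph V} (σ : Sym2 V → Bool) (t : ℕ)
    {n : ℕ} (hn : n ≤ symChromT G σ t) :
    ∃ H : G.Subgraph, n ≤ symChromT H.coe (restrict σ H.verts) t ∧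
      ∀ v ∈ H.verts,
        symChromT (H.deleteVerts {v}).coe (restrict σ (H.deleteVerts {v}).verts) t < n := by
  have htop : symChromT G σ t ≤ symChromT (⊤ : G.Subgraph).coe (restrict σ ⊤) t :=
    symChromT_le_of_hom SimpleGraph.Subgraph.topIso.symm.toHom fun _ _ _ => rfl
  obtain ⟨H, hH⟩ := exists_minimal_of_wellFoundedLT
    (fun H : G.Subgraph => n ≤ symChromT H.coe (restrict σ H.verts) t) ⟨⊤, hn.trans htop⟩
  refine ⟨H, hH.prop, fun v hv => not_le.1 (hH.not_prop_of_lt ?_)⟩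
  refine SimpleGraph.Subgraph.deleteVerts_le.lt_of_ne fun hdel => ?_
  have : v ∈ (H.deleteVerts {v}).verts := by rw [hdel]; exact hv
  simp at this

end

theorem stmt13_general {V : Type*} [Fintype V] (G : SimpleGraph V) (σ : Sym2 V → Bool)
    (t k : ℕ) (h : symChromT G σ t = t + 2 * k)
    (i : ℕ) (hik : i ≤ k) :
    ∃ H : G.Subgraph,
      symChromT H.coe (restrict σ H.verts) t = t + 2 * i ∧
      ∀ v ∈ H.verts,
        symChromT (H.deleteVerts {v}).coe (restrict σ (H.deleteVerts {v}).verts) t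
          < t + 2 * i := by
  obtain ⟨H, hge, hcrit⟩ := exists_subgraph_critical σ t (n := t + 2 * i) (G := G) (by omega)
  refine ⟨H, le_antisymm ?_ hge, hcrit⟩
  rcases H.verts.eq_empty_or_nonempty with hempty | ⟨v, hv⟩
  · have : IsEmpty H.verts := Set.isEmpty_coe_sort.2 hempty
    have := symChromT_le (symColorable_zero_of_isEmpty H.coe (restrict σ H.verts) t)
    omega
  · obtain ⟨m, hm, -⟩ := exists_symChromT_eq H.coe (restrict σ H.verts) t
    have := symChromT_le_symChromT_deleteVerts_add_two σ t hv
    have := hcrit v hv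
    omega

/-- if `χ^t_sym(G,σ) = t + 2k`, then for each
`i ∈ {1, …, k}`, `(G,σ)` contains a subgraph `(H, σ|_H)` with
`χ^t_sym(H, σ|_H) = t + 2i` which is critical: deleting any vertex of `H`
strictly decreases its symset `t`-chromatic number. -/
theorem stmt13 {V : Type*} [Fintype V] (G : SimpleGraph V) (σ : Sym2 V → Bool)
    (t k : ℕ) (ht : t ≤ chrom G) (h : symChromT G σ t = t + 2 * k)
    (i : ℕ) (hi1 : 1 ≤ i) (hik : i ≤ k) :
    ∃ H : G.Subgraph,
      symChromT H.coe (restrict σ H.verts) t = t + 2 * i ∧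
      ∀ v ∈ H.verts,
        symChromT (H.deleteVerts {v}).coe (restrict σ (H.deleteVerts {v}).verts) t
          < t + 2 * i :=
  stmt13_general G σ t k h i hik

end SymSet
end

section
/- Let G be a graph and t an integer with 0 ≤ t ≤ χ(G) − 1. Then the symset t-chromatic spectrum of G is exactly the arithmetic progression Σ_{χ^t_sym}(G) = {t+2, t+4, …, M_{χ^t_sym}(G)}, i.e. it contains every value of the same parity as t between t+2 and its maximum M_{χ^t_sym}(G). -/
/-!
Write `χ^t_sym(G, σ) = t + 2 k(σ)`, where `k(σ)` is the least number of pairs needed. Since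
`t < χ(G)`, no coloring uses only the `t` self-inverse colors, so `k(σ) ≥ 1`; the all-negative
signature has `k = 1`, as a single color `a` with `a ≠ -a` colors every vertex. Changing the sign
of one edge `uv` raises `k` by at most one: give `u` a color from a fresh pair. So along a sequence
of single-edge changes from the all-negative signature to one attaining the maximum, `k` takes
every value between `1` and its maximum.
-/

theorem exists_eq_of_update_le_succ {α β : Type*} [DecidableEq α] (f : (α → β) → ℕ)
    (hf : ∀ g a b, f (Function.update g a b) ≤ f g + 1) {g₀ g₁ : α → β} (s : Finset α)
    (hs : ∀ a ∉ s, g₀ a = g₁ a) {m : ℕ} (h₀ : f g₀ ≤ m) (h₁ : m ≤ f g₁) :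
    ∃ g, f g = m := by
  induction s using Finset.induction_on generalizing g₀ with
  | empty =>
    obtain rfl : g₀ = g₁ := funext fun a => hs a (Finset.notMem_empty a)
    exact ⟨g₀, by omega⟩
  | insert a s _ ih =>
    by_cases hm : f (Function.update g₀ a (g₁ a)) ≤ m
    · refine ih (fun x hx => ?_) hm
      rcases eq_or_ne x a with rfl | hxa
      · exact Function.update_self ..
      · rw [Function.update_of_ne hxa]
        exact hs x (by simp [hxa, hx])
    · exact ⟨g₀, by have := hf g₀ a (g₁ a); omega⟩

namespace SymSet

def symCastSucc {t k : ℕ} : Sym t k → Sym t (k + 1) :=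
  Sum.map id (Prod.map Fin.castSucc id)

lemma symCastSucc_injective {t k : ℕ} : Function.Injective (symCastSucc (t := t) (k := k)) := by
  rintro (i | ⟨i, b⟩) (j | ⟨j, c⟩) h <;> simp_all [symCastSucc]

lemma signAct_symCastSucc {t k : ℕ} (s : Bool) (x : Sym t k) :
    signAct s (symCastSucc x) = symCastSucc (signAct s x) := by
  rcases x with i | ⟨i, b⟩ <;> cases s <;> rfl

lemma symCastSucc_ne_signAct_last {t k : ℕ} (x : Sym t k) (s b : Bool) :
    symCastSucc x ≠ signAct s (.inr (Fin.last k, b)) := by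
  rcases x with i | ⟨i, c⟩ <;> cases s <;>
    simp [symCastSucc, signAct, symNeg, Fin.castSucc_ne_last]

lemma signAct_eq_self_of_sym_zero {t : ℕ} (s : Bool) (x : Sym t 0) : signAct s x = x := by
  rcases x with i | ⟨i, _⟩
  · cases s <;> rfl
  · exact i.elim0

section Coloring

variable {V : Type*} {G : SimpleGraph V} {σ : Sym2 V → Bool} {t k : ℕ}

lemma SymColorable.succ_of_eqOn_adj_ne (u : V) (h : SymColorable G σ t k)
    {σ' : Sym2 V → Bool}
    (hσ : ∀ ⦃v w⦄, G.Adj v w → v ≠ u → w ≠ u → σ' s(v, w) = σ s(v, w)) :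
    SymColorable G σ' t (k + 1) := by
  classical
  obtain ⟨c, hc⟩ := h
  refine ⟨fun v => if v = u then .inr (Fin.last k, true) else symCastSucc (c v),
    fun v w hvw heq => ?_⟩
  by_cases hv : v = u <;> by_cases hw : w = u <;> simp only [hv, hw, if_true, if_false] at heq
  · exact hvw.ne (hv.trans hw.symm)
  · rw [signAct_symCastSucc] at heq
    exact symCastSucc_ne_signAct_last _ true true heq.symm
  · exact symCastSucc_ne_signAct_last _ _ _ heq
  · rw [hσ hvw hv hw, signAct_symCastSucc] at heq
    exact hc hvw (symCastSucc_injective heq)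

lemma SymColorable.colorable_of_zero (h : SymColorable G σ t 0) : G.Colorable t := by
  obtain ⟨c, hc⟩ := h
  let e : Sym t 0 ≃ Fin t := Equiv.sumEmpty _ _
  refine ⟨SimpleGraph.Coloring.mk (fun v => e (c v)) fun {v w} hvw heq => ?_⟩
  exact hc hvw ((e.injective heq).trans (signAct_eq_self_of_sym_zero _ _).symm)

variable (G σ t) in
lemma symColorable_card [Fintype V] : SymColorable G σ t (Fintype.card V) := by
  refine ⟨fun v => .inr (Fintype.equivFin V v, true), fun v w hvw heq => hvw.ne ?_⟩
  cases hs : σ s(v, w) <;> simp_all [signAct, symNeg]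

variable (G t) in
lemma symColorable_allNeg : SymColorable G (fun _ => false) t 1 :=
  ⟨fun _ => .inr (0, true), fun _ _ _ heq => by simp [signAct, symNeg] at heq⟩

variable (G σ t) in
noncomputable def minPairs : ℕ :=
  sInf {k | SymColorable G σ t k}

lemma minPairs_le (h : SymColorable G σ t k) : minPairs G σ t ≤ k :=
  Nat.sInf_le h

variable (G σ t) in
lemma symColorable_minPairs [Fintype V] : SymColorable G σ t (minPairs G σ t) :=
  Nat.sInf_mem (s := {k | SymColorable G σ t k}) ⟨_, symColorable_card G σ t⟩

variable (G σ t) in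
lemma symChromT_eq_add_minPairs [Fintype V] : symChromT G σ t = t + 2 * minPairs G σ t := by
  refine le_antisymm (Nat.sInf_le ⟨_, rfl, symColorable_minPairs G σ t⟩) ?_
  obtain ⟨k, hk, hcol⟩ : symChromT G σ t ∈ {n | ∃ k, n = t + 2 * k ∧ SymColorable G σ t k} :=
    Nat.sInf_mem ⟨_, _, rfl, symColorable_minPairs G σ t⟩
  have := minPairs_le hcol
  omega

variable (σ) in
lemma one_le_minPairs [Fintype V] (ht : t < chrom G) : 1 ≤ minPairs G σ t := by
  by_contra! h0
  have hcol := (Nat.lt_one_iff.1 h0 ▸ symColorable_minPairs G σ t).colorable_of_zero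
  have : chrom G ≤ t := by
    simpa [chrom] using ENat.toNat_le_toNat hcol.chromaticNumber_le (by simp)
  omega

lemma minPairs_allNeg [Fintype V] (ht : t < chrom G) : minPairs G (fun _ => false) t = 1 :=
  le_antisymm (minPairs_le (symColorable_allNeg G t)) (one_le_minPairs _ ht)

lemma minPairs_update_le [Fintype V] [DecidableEq (Sym2 V)] (e : Sym2 V) (b : Bool) :
    minPairs G (Function.update σ e b) t ≤ minPairs G σ t + 1 := by
  induction e using Sym2.ind with
  | _ u u' =>
    refine minPairs_le ((symColorable_minPairs G σ t).succ_of_eqOn_adj_ne u ?_)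
    intro v w _ hv hw
    refine Function.update_of_ne (fun hvw => ?_) _ _
    rcases Sym2.eq_iff.1 hvw with ⟨rfl, -⟩ | ⟨-, rfl⟩
    exacts [hv rfl, hw rfl]

end Coloring

/-- for `0 ≤ t ≤ χ(G) - 1`, the symset `t`-chromatic spectrum
of `G` is exactly the arithmetic progression
`{t+2, t+4, …, M_{χ^t_sym}(G)}`: it consists of all integers of the same parity
as `t` between `t + 2` and its maximum. -/
theorem stmt14 {V : Type*} [Fintype V] (G : SimpleGraph V) (t : ℕ)
    (ht : t < chrom G) :
    {n | ∃ σ : Sym2 V → Bool, symChromT G σ t = n} =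
      {n | t + 2 ≤ n ∧ n ≤ sSup {m | ∃ σ : Sym2 V → Bool, symChromT G σ t = m} ∧
        n % 2 = t % 2} := by
  classical
  set spectrum := {m | ∃ σ : Sym2 V → Bool, symChromT G σ t = m}
  have hbdd : BddAbove spectrum := by
    refine ⟨t + 2 * Fintype.card V, ?_⟩
    rintro _ ⟨σ, rfl⟩
    have := minPairs_le (symColorable_card G σ t)
    rw [symChromT_eq_add_minPairs]
    omega
  ext n
  constructor
  · rintro ⟨σ, rfl⟩
    have := one_le_minPairs σ ht
    refine ⟨?_, le_csSup hbdd ⟨σ, rfl⟩, ?_⟩ <;> rw [symChromT_eq_add_minPairs] <;> omega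
  · rintro ⟨hlow, hhigh, hpar⟩
    obtain ⟨σmax, hσmax⟩ := Nat.sSup_mem (s := spectrum) ⟨_, fun _ => false, rfl⟩ hbdd
    rw [← hσmax, symChromT_eq_add_minPairs] at hhigh
    have hk₀ : minPairs G (fun _ => false) t ≤ (n - t) / 2 := by
      rw [minPairs_allNeg ht]
      omega
    have hk₁ : (n - t) / 2 ≤ minPairs G σmax t := by omega
    obtain ⟨σ, hσ⟩ := exists_eq_of_update_le_succ (minPairs G · t)
      (fun _ => minPairs_update_le) Finset.univ (by simp) hk₀ hk₁
    exact ⟨σ, by rw [symChromT_eq_add_minPairs, hσ]; omega⟩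

end SymSet
end
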